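/- (First-order discrete Euler–Lagrange equation on ℤ) Let a, b ∈ ℤ with b ≥ a + 2 and let L : ℤ × ℝ × ℝ → ℝ be continuously differentiable in its last two arguments. If y* : {a, …, b} → ℝ is a local minimizer of 𝓛[y] = ∑_{t=a}^{b−1} L(t, y(t+1), Δy(t)) subject to y(a) = y_a and y(b) = y_b, then for all t ∈ {a, …, b−2}: Δ[L_{u₁}(t, y*(t+1), Δy*(t))] = L_{u₀}(t, y*(t+1), Δy*(t)), where Δf(t) = f(t+1) − f(t). -/

import Mathlib

/-!
Perturbing `y*` at the single interior point `t + 1` changes only the summands with indices `t`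
and `t + 1`, so `v ↦ L(t, v, v - y*(t)) + L(t + 1, y*(t + 2), y*(t + 2) - v)` has a local minimum
at `v = y*(t + 1)`. By Fermat's theorem and the chain rule its derivative there,
`L_{u₀}(t, …) + L_{u₁}(t, …) - L_{u₁}(t + 1, …)`, vanishes.
-/

open Finset

section Partials

variable {𝕜 G : Type*} [NontriviallyNormedField 𝕜] [NormedAddCommGroup G] [NormedSpace 𝕜 G]

theorem DifferentiableAt.hasFDerivAt_of_partials {f : 𝕜 × 𝕜 → G} {p : 𝕜 × 𝕜} {f₀ f₁ : G}
    (hf : DifferentiableAt 𝕜 f p) (h₀ : HasDerivAt (fun x => f (x, p.2)) f₀ p.1)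
    (h₁ : HasDerivAt (fun y => f (p.1, y)) f₁ p.2) :
    HasFDerivAt f ((ContinuousLinearMap.fst 𝕜 𝕜 𝕜).smulRight f₀
      + (ContinuousLinearMap.snd 𝕜 𝕜 𝕜).smulRight f₁) p := by
  obtain ⟨u, v⟩ := p
  convert hf.hasFDerivAt using 1
  refine ContinuousLinearMap.prod_ext (ContinuousLinearMap.ext_ring ?_)
    (ContinuousLinearMap.ext_ring ?_)
  · have := hf.hasFDerivAt.comp u (hasFDerivAt_prodMk_left (𝕜 := 𝕜) u v)
    simpa using congr($(h₀.hasFDerivAt.unique this) 1)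
  · have := hf.hasFDerivAt.comp v (hasFDerivAt_prodMk_right (𝕜 := 𝕜) u v)
    simpa using congr($(h₁.hasFDerivAt.unique this) 1)

end Partials

noncomputable def discreteAction (L : ℤ → ℝ → ℝ → ℝ) (a b : ℤ) (y : ℤ → ℝ) : ℝ :=
  ∑ t ∈ Icc a (b - 1), L t (y (t + 1)) (y (t + 1) - y t)

def localAction (L : ℤ → ℝ → ℝ → ℝ) (y : ℤ → ℝ) (t : ℤ) (v : ℝ) : ℝ :=
  L t v (v - y t) + L (t + 1) (y (t + 2)) (y (t + 2) - v)

section DiscreteAction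

variable {L : ℤ → ℝ → ℝ → ℝ} {a b t : ℤ}

theorem discreteAction_update (y : ℤ → ℝ) (ht : t ∈ Icc a (b - 2)) (v : ℝ) :
    discreteAction L a b (Function.update y (t + 1) v)
      = discreteAction L a b y - localAction L y t (y (t + 1)) + localAction L y t v := by
  rw [mem_Icc] at ht
  have hsub : {t, t + 1} ⊆ Icc a (b - 1) := by
    intro s hs
    simp only [mem_insert, mem_singleton, mem_Icc] at hs ⊢
    omega
  have hdiff : discreteAction L a b (Function.update y (t + 1) v) - discreteAction L a b y
      = ∑ s ∈ {t, t + 1}, (L s (Function.update y (t + 1) v (s + 1))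
          (Function.update y (t + 1) v (s + 1) - Function.update y (t + 1) v s)
        - L s (y (s + 1)) (y (s + 1) - y s)) := by
    rw [discreteAction, discreteAction, ← sum_sub_distrib]
    refine (sum_subset hsub fun s _ hs => ?_).symm
    simp only [mem_insert, mem_singleton, not_or] at hs
    rw [Function.update_of_ne (by omega), Function.update_of_ne (by omega), sub_self]
  rw [sum_pair (by omega), show t + 1 + 1 = t + 2 by ring, Function.update_self,
    Function.update_of_ne (by omega), Function.update_of_ne (by omega)] at hdiff
  rw [localAction, localAction]
  linarith

theorem isLocalMin_localAction {ystar : ℤ → ℝ} (ht : t ∈ Icc a (b - 2))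
    (hmin : ∃ δ > (0 : ℝ), ∀ y : ℤ → ℝ, (y a = ystar a ∧ y b = ystar b) →
      (∀ s ∈ Icc a b, |y s - ystar s| < δ) → discreteAction L a b ystar ≤ discreteAction L a b y) :
    IsLocalMin (localAction L ystar t) (ystar (t + 1)) := by
  obtain ⟨δ, hδ, hmin⟩ := hmin
  have ht' := mem_Icc.mp ht
  filter_upwards [Metric.ball_mem_nhds _ hδ] with v hv
  have hbc : Function.update ystar (t + 1) v a = ystar a ∧
      Function.update ystar (t + 1) v b = ystar b :=
    ⟨Function.update_of_ne (by omega) _ _, Function.update_of_ne (by omega) _ _⟩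
  have hclose : ∀ s ∈ Icc a b, |Function.update ystar (t + 1) v s - ystar s| < δ := by
    intro s _
    rcases eq_or_ne s (t + 1) with rfl | hs
    · simpa [Real.dist_eq] using hv
    · simpa [Function.update_of_ne hs] using hδ
  have := hmin _ hbc hclose
  rw [discreteAction_update ystar ht] at this
  linarith

theorem hasDerivAt_localAction {L0 L1 : ℤ → ℝ → ℝ → ℝ}
    (hL : ∀ t : ℤ, Differentiable ℝ (fun p : ℝ × ℝ => L t p.1 p.2))
    (hL0 : ∀ (t : ℤ) (u₀ u₁ : ℝ), HasDerivAt (fun x => L t x u₁) (L0 t u₀ u₁) u₀)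
    (hL1 : ∀ (t : ℤ) (u₀ u₁ : ℝ), HasDerivAt (fun x => L t u₀ x) (L1 t u₀ u₁) u₁)
    (y : ℤ → ℝ) (t : ℤ) :
    HasDerivAt (localAction L y t)
      (L0 t (y (t + 1)) (y (t + 1) - y t) + L1 t (y (t + 1)) (y (t + 1) - y t)
        - L1 (t + 1) (y (t + 2)) (y (t + 2) - y (t + 1))) (y (t + 1)) := by
  have hF (s : ℤ) (u₀ u₁ : ℝ) :=
    (hL s (u₀, u₁)).hasFDerivAt_of_partials (hL0 s u₀ u₁) (hL1 s u₀ u₁)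
  have hv : HasDerivAt (fun v : ℝ => v) 1 (y (t + 1)) := hasDerivAt_id _
  have h₁ := (hF t (y (t + 1)) (y (t + 1) - y t)).comp_hasDerivAt (y (t + 1))
    (hv.prodMk (hv.sub_const (y t)))
  have h₂ := (hF (t + 1) (y (t + 2)) (y (t + 2) - y (t + 1))).comp_hasDerivAt
    (y (t + 1)) ((hasDerivAt_const _ (y (t + 2))).prodMk (hv.const_sub (y (t + 2))))
  simp only [add_apply, ContinuousLinearMap.smulRight_apply,
    ContinuousLinearMap.coe_fst', ContinuousLinearMap.coe_snd', one_smul, zero_smul, zero_add,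
    neg_smul] at h₁ h₂
  exact (h₁.add h₂).congr_deriv (by ring)

end DiscreteAction

theorem discrete_euler_lagrange_first_order_general (a b : ℤ)
    (L L0 L1 : ℤ → ℝ → ℝ → ℝ)
    (hC : ∀ t : ℤ, ContDiff ℝ 1 (fun p : ℝ × ℝ => L t p.1 p.2))
    (hL0 : ∀ (t : ℤ) (u₀ u₁ : ℝ), HasDerivAt (fun x => L t x u₁) (L0 t u₀ u₁) u₀)
    (hL1 : ∀ (t : ℤ) (u₀ u₁ : ℝ), HasDerivAt (fun x => L t u₀ x) (L1 t u₀ u₁) u₁)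
    (ya yb : ℝ) (ystar : ℤ → ℝ) (hbc : ystar a = ya ∧ ystar b = yb)
    (hmin : ∃ δ > (0 : ℝ), ∀ y : ℤ → ℝ, (y a = ya ∧ y b = yb) →
      (∀ t ∈ Finset.Icc a b, |y t - ystar t| < δ) →
      ∑ t ∈ Finset.Icc a (b - 1), L t (ystar (t + 1)) (ystar (t + 1) - ystar t)
        ≤ ∑ t ∈ Finset.Icc a (b - 1), L t (y (t + 1)) (y (t + 1) - y t)) :
    ∀ t ∈ Finset.Icc a (b - 2),
      L1 (t + 1) (ystar (t + 2)) (ystar (t + 2) - ystar (t + 1))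
        - L1 t (ystar (t + 1)) (ystar (t + 1) - ystar t)
      = L0 t (ystar (t + 1)) (ystar (t + 1) - ystar t) := by
  intro t ht
  obtain ⟨rfl, rfl⟩ := hbc
  have hderiv := hasDerivAt_localAction (fun s => (hC s).differentiable one_ne_zero) hL0 hL1 ystar t
  have := (isLocalMin_localAction ht hmin).hasDerivAt_eq_zero hderiv
  linarith

/-- First-order discrete Euler–Lagrange equation on `ℤ`: if `y*` is a local
minimizer (sup norm) of `𝓛[y] = ∑_{t=a}^{b−1} L(t, y(t+1), Δy(t))` subject to
`y(a) = y_a`, `y(b) = y_b`, then `Δ[L_{u₁}(t, y*(t+1), Δy*(t))] = L_{u₀}(t, y*(t+1), Δy*(t))`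
for `t ∈ {a, …, b−2}`. Here `L0, L1` are the partial derivatives of `L` with
respect to its second and third arguments. -/
theorem discrete_euler_lagrange_first_order (a b : ℤ) (hab : a + 2 ≤ b)
    (L L0 L1 : ℤ → ℝ → ℝ → ℝ)
    (hC : ∀ t : ℤ, ContDiff ℝ 1 (fun p : ℝ × ℝ => L t p.1 p.2))
    (hL0 : ∀ (t : ℤ) (u₀ u₁ : ℝ), HasDerivAt (fun x => L t x u₁) (L0 t u₀ u₁) u₀)
    (hL1 : ∀ (t : ℤ) (u₀ u₁ : ℝ), HasDerivAt (fun x => L t u₀ x) (L1 t u₀ u₁) u₁)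
    (ya yb : ℝ) (ystar : ℤ → ℝ) (hbc : ystar a = ya ∧ ystar b = yb)
    (hmin : ∃ δ > (0 : ℝ), ∀ y : ℤ → ℝ, (y a = ya ∧ y b = yb) →
      (∀ t ∈ Finset.Icc a b, |y t - ystar t| < δ) →
      ∑ t ∈ Finset.Icc a (b - 1), L t (ystar (t + 1)) (ystar (t + 1) - ystar t)
        ≤ ∑ t ∈ Finset.Icc a (b - 1), L t (y (t + 1)) (y (t + 1) - y t)) :
    ∀ t ∈ Finset.Icc a (b - 2),
      L1 (t + 1) (ystar (t + 2)) (ystar (t + 2) - ystar (t + 1))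
        - L1 t (ystar (t + 1)) (ystar (t + 1) - ystar t)
      = L0 t (ystar (t + 1)) (ystar (t + 1) - ystar t) :=
  discrete_euler_lagrange_first_order_general a b L L0 L1 hC hL0 hL1 ya yb ystar hbc hmin
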